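/- arXiv:2602.10360 — 7 statements merged into one kernel-verified Lean document; each statement's English description precedes it below -/
import Mathlib

section
/- Let n ≥ 2 be an integer, let ℓ be a real number with ℓ ≥ 100·log₂(n), let m be an integer with m ≥ ℓ·‖x‖₀, and let x ∈ ℤⁿ. Let h : [n] → [m] and g : [n] → {−1,+1} be independent uniformly random functions. Then for every fixed index i ∈ [m], Pr[ Σ_{j ∈ [n], h(j)=i} g(j)·x_j ≠ 0 ] ≤ 0.01. -/
open Finset
open scoped Classical

/-- Domain Reduction Lemma 2: if `m ≥ ℓ · ‖x‖₀` with `ℓ ≥ 100 log₂ n`, then for a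
uniformly random `h : [n] → [m]` and uniformly random signs `g : [n] → {±1}`, each
coordinate `∑_{h(j)=i} g(j) x_j` is nonzero with probability at most `0.01`. -/
theorem stmt1 (n : ℕ) (hn : 2 ≤ n) (ℓ : ℝ) (hℓ : 100 * Real.logb 2 n ≤ ℓ)
    (x : Fin n → ℤ) (m : ℕ)
    (hm : ℓ * ((Finset.univ.filter (fun j : Fin n => x j ≠ 0)).card : ℝ) ≤ (m : ℝ)) :
    ∀ i : Fin m,
      ((Finset.univ.filter (fun p : (Fin n → Fin m) × (Fin n → Bool) =>
          (∑ j ∈ Finset.univ.filter (fun j : Fin n => p.1 j = i),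
            (if p.2 j then (1 : ℤ) else -1) * x j) ≠ 0)).card : ℝ) /
        (Fintype.card ((Fin n → Fin m) × (Fin n → Bool)) : ℝ) ≤ 0.01 := by
  intro i
  have hm1 : 0 < m := i.pos
  set S : Finset (Fin n) := Finset.univ.filter (fun j : Fin n => x j ≠ 0) with hS
  -- subset of union of events
  have hsub : (Finset.univ.filter (fun p : (Fin n → Fin m) × (Fin n → Bool) =>
      (∑ j ∈ Finset.univ.filter (fun j : Fin n => p.1 j = i),
        (if p.2 j then (1 : ℤ) else -1) * x j) ≠ 0)) ⊆
      S.biUnion (fun j => Finset.univ.filter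
        (fun p : (Fin n → Fin m) × (Fin n → Bool) => p.1 j = i)) := by
    intro p hp
    simp only [mem_filter, mem_univ, true_and] at hp
    by_contra hc
    simp only [mem_biUnion, mem_filter, mem_univ, true_and, not_exists, not_and] at hc
    apply hp
    apply Finset.sum_eq_zero
    intro j hj
    simp only [mem_filter, mem_univ, true_and] at hj
    have hx : x j = 0 := by
      by_contra hx
      exact hc j (by simp [hS, hx]) hj
    simp [hx]
  -- card of each event
  have hAcard : ∀ j : Fin n, (Finset.univ.filter
      (fun p : (Fin n → Fin m) × (Fin n → Bool) => p.1 j = i)).card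
        = m ^ (n - 1) * 2 ^ n := by
    intro j
    have h1 : (Finset.univ.filter
        (fun p : (Fin n → Fin m) × (Fin n → Bool) => p.1 j = i))
        = (Finset.univ.filter (fun h : Fin n → Fin m => h j = i)) ×ˢ Finset.univ := by
      ext p
      simp [Finset.mem_product]
    rw [h1, Finset.card_product]
    have h2 : (Finset.univ.filter (fun h : Fin n → Fin m => h j = i))
        = Fintype.piFinset (fun k => if k = j then ({i} : Finset (Fin m)) else Finset.univ) := by
      ext h
      simp only [mem_filter, mem_univ, true_and, Fintype.mem_piFinset]
      constructor
      · intro hh k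
        by_cases hk : k = j <;> simp [hk, hh]
      · intro hh
        have := hh j
        simpa using this
    congr 1
    · rw [h2, Fintype.card_piFinset]
      have h3 : ∀ k : Fin n,
          (if k = j then ({i} : Finset (Fin m)) else Finset.univ).card
            = if k = j then 1 else m := by
        intro k
        by_cases hk : k = j <;> simp [hk]
      rw [Finset.prod_congr rfl (fun k _ => h3 k)]
      rw [← Finset.mul_prod_erase Finset.univ _ (Finset.mem_univ j)]
      have h4 : ∀ k ∈ Finset.univ.erase j, (if k = j then 1 else m) = m := by
        intro k hk
        simp [Finset.ne_of_mem_erase hk]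
      rw [Finset.prod_congr rfl h4, Finset.prod_const,
        Finset.card_erase_of_mem (Finset.mem_univ j), Finset.card_univ, Fintype.card_fin]
      simp
    · simp
  -- card bound
  have hcard : (Finset.univ.filter (fun p : (Fin n → Fin m) × (Fin n → Bool) =>
      (∑ j ∈ Finset.univ.filter (fun j : Fin n => p.1 j = i),
        (if p.2 j then (1 : ℤ) else -1) * x j) ≠ 0)).card
      ≤ S.card * (m ^ (n - 1) * 2 ^ n) := by
    calc _ ≤ (S.biUnion (fun j => Finset.univ.filter
        (fun p : (Fin n → Fin m) × (Fin n → Bool) => p.1 j = i))).card :=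
          Finset.card_le_card hsub
      _ ≤ ∑ j ∈ S, (Finset.univ.filter
          (fun p : (Fin n → Fin m) × (Fin n → Bool) => p.1 j = i)).card :=
          Finset.card_biUnion_le
      _ = S.card * (m ^ (n - 1) * 2 ^ n) := by
          rw [Finset.sum_congr rfl (fun j _ => hAcard j), Finset.sum_const, smul_eq_mul]
  -- denominator
  have hD : (Fintype.card ((Fin n → Fin m) × (Fin n → Bool)) : ℕ) = m ^ n * 2 ^ n := by
    simp
  have hDpos : (0 : ℝ) < ((m : ℝ) ^ n * 2 ^ n) := by positivity
  rw [hD]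
  rw [div_le_iff₀ (by push_cast; exact hDpos)]
  -- 100 * S.card ≤ m (in ℝ)
  have hlog : (1 : ℝ) ≤ Real.logb 2 n := by
    have h2n : (2:ℝ) ≤ (n:ℝ) := by exact_mod_cast hn
    have : Real.logb 2 2 ≤ Real.logb 2 n := by gcongr <;> norm_num
    simpa [Real.logb_self_eq_one] using this
  have h100 : (100 : ℝ) ≤ ℓ := by nlinarith
  have hms : 100 * (S.card : ℝ) ≤ (m : ℝ) := by
    have := mul_le_mul_of_nonneg_right h100 (Nat.cast_nonneg S.card : (0:ℝ) ≤ S.card)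
    linarith [hm]
  have hcast : ((Finset.univ.filter (fun p : (Fin n → Fin m) × (Fin n → Bool) =>
      (∑ j ∈ Finset.univ.filter (fun j : Fin n => p.1 j = i),
        (if p.2 j then (1 : ℤ) else -1) * x j) ≠ 0)).card : ℝ)
      ≤ (S.card : ℝ) * ((m : ℝ) ^ (n - 1) * 2 ^ n) := by
    exact_mod_cast hcard
  have hmn : (m : ℝ) ^ n = (m : ℝ) * (m : ℝ) ^ (n - 1) := by
    rw [← pow_succ']
    congr 1
    omega
  calc _ ≤ (S.card : ℝ) * ((m : ℝ) ^ (n - 1) * 2 ^ n) := hcast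
    _ ≤ ((m : ℝ) / 100) * ((m : ℝ) ^ (n - 1) * 2 ^ n) := by
        apply mul_le_mul_of_nonneg_right _ (by positivity)
        linarith
    _ = 0.01 * ((m : ℝ) ^ n * 2 ^ n) := by
        rw [hmn]; ring
    _ ≤ 0.01 * (((m ^ n * 2 ^ n : ℕ) : ℝ)) := by push_cast; exact le_refl _
end

section
/- Let n, m ≥ 1 be integers, let ℓ, ℓ' ≥ 1 be real numbers, and let x ∈ ℝⁿ be a vector with m ≥ ‖x‖₀·ℓ·ℓ'. Let h : [n] → [m] be a uniformly random function. Then Pr[ ‖x‖₀ ≥ ‖f_h(x)‖₀ ≥ (1 − 1/ℓ)·‖x‖₀ ] ≥ 1 − 1/ℓ'. -/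
/-!
An element `j` of the support of `x` can only fail to produce its own nonzero bucket of `f_h(x)`
if it collides with another support element, so `‖f_h(x)‖₀ ≥ s - C(h)` where `s = ‖x‖₀` and
`C(h)` counts colliding support elements. Each pair collides with probability `1/m`, so
`𝔼 C ≤ s² / m ≤ s / (ℓ ℓ')`, and Markov's inequality bounds `Pr[C > s/ℓ]` by `1/ℓ'`.
-/

open Finset
open scoped Classical

namespace BucketHash

theorem one_sub_one_div_le_card_filter_div {ι : Type*} [Fintype ι] [Nonempty ι] (p : ι → Prop)
    [DecidablePred p] {c : ℝ} (hc : 0 < c) (hbad : (#{i | ¬ p i} : ℝ) * c ≤ Fintype.card ι) :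
    1 - 1 / c ≤ (#{i | p i} : ℝ) / Fintype.card ι := by
  have split : (#{i | p i} : ℝ) + #{i | ¬ p i} = Fintype.card ι := by
    exact_mod_cast card_filter_add_card_filter_not p
  rw [le_div_iff₀ (by exact_mod_cast Fintype.card_pos), sub_mul, one_div_mul_eq_div]
  linarith [(le_div_iff₀ hc).2 hbad]

variable {α β M : Type*} [Fintype α] [Fintype β] [DecidableEq β]

section Collisions

variable [DecidableEq α]

theorem card_filter_apply_eq_apply_mul_card {a b : α} (hab : a ≠ b) :
    #{h : α → β | h a = h b} * Fintype.card β = Fintype.card β ^ Fintype.card α := by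
  have fiber (c : β) : #{h : α → β | h a = h b} = #{h : α → β | h a = c} := by
    refine card_nbij' (fun h => Function.update h a c) (fun g => Function.update g a (g b))
      ?_ ?_ ?_ ?_ <;> intro h <;> simp +contextual [hab.symm]
  calc #{h : α → β | h a = h b} * Fintype.card β
      = ∑ c : β, #{h : α → β | h a = c} := by
        simp only [← fiber, sum_const, card_univ, smul_eq_mul, mul_comm]
    _ = Fintype.card β ^ Fintype.card α := by
      rw [← card_eq_sum_card_fiberwise (f := fun h : α → β => h a) (fun _ _ => mem_univ _),
        card_univ, Fintype.card_fun]

def collisions (h : α → β) (s : Finset α) : Finset α :=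
  {j ∈ s | ∃ j' ∈ s, j' ≠ j ∧ h j' = h j}

theorem card_mul_card_filter_collides_le (s : Finset α) (j : α) :
    Fintype.card β * #{h : α → β | ∃ j' ∈ s, j' ≠ j ∧ h j' = h j}
      ≤ #s * Fintype.card β ^ Fintype.card α := by
  have union_bound : #{h : α → β | ∃ j' ∈ s, j' ≠ j ∧ h j' = h j}
      ≤ ∑ j' ∈ s.erase j, #{h : α → β | h j' = h j} := by
    refine (card_le_card fun h hh => ?_).trans card_biUnion_le
    obtain ⟨j', hj', hne, heq⟩ := (mem_filter.1 hh).2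
    exact mem_biUnion.2 ⟨j', mem_erase.2 ⟨hne, hj'⟩, by simpa using heq⟩
  calc Fintype.card β * #{h : α → β | ∃ j' ∈ s, j' ≠ j ∧ h j' = h j}
      ≤ ∑ j' ∈ s.erase j, #{h : α → β | h j' = h j} * Fintype.card β := by
        rw [mul_comm, ← sum_mul]; exact Nat.mul_le_mul_right _ union_bound
    _ = #(s.erase j) * Fintype.card β ^ Fintype.card α := by
        rw [sum_congr rfl fun j' hj' => card_filter_apply_eq_apply_mul_card (mem_erase.1 hj').1,
          sum_const, smul_eq_mul]
    _ ≤ #s * Fintype.card β ^ Fintype.card α := Nat.mul_le_mul_right _ (card_erase_le)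

theorem card_mul_sum_card_collisions_le (s : Finset α) :
    Fintype.card β * ∑ h : α → β, #(collisions h s)
      ≤ #s ^ 2 * Fintype.card β ^ Fintype.card α := by
  have swap : ∑ h : α → β, #(collisions h s)
      = ∑ j ∈ s, #{h : α → β | ∃ j' ∈ s, j' ≠ j ∧ h j' = h j} := by
    simp only [collisions, card_filter]
    exact sum_comm
  calc Fintype.card β * ∑ h : α → β, #(collisions h s)
      ≤ ∑ j ∈ s, #s * Fintype.card β ^ Fintype.card α := by
        rw [swap, mul_sum]; exact sum_le_sum fun j _ => card_mul_card_filter_collides_le s j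
    _ = #s ^ 2 * Fintype.card β ^ Fintype.card α := by rw [sum_const, smul_eq_mul]; ring

end Collisions

section Buckets

variable [AddCommMonoid M] [DecidableEq M]

/-- `f_h(x)`. -/
def bucketSum (h : α → β) (x : α → M) (i : β) : M :=
  ∑ j ∈ univ.filter (fun j => h j = i), x j

theorem card_bucketSum_ne_zero_le (h : α → β) (x : α → M) :
    #{i | bucketSum h x i ≠ 0} ≤ #{j | x j ≠ 0} :=
  calc #{i | bucketSum h x i ≠ 0}
      ≤ #(image h {j | x j ≠ 0}) := card_le_card fun i hi => by
        obtain ⟨j, hj, hxj⟩ := exists_ne_zero_of_sum_ne_zero (mem_filter.1 hi).2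
        exact mem_image.2 ⟨j, by simpa using hxj, by simpa using hj⟩
    _ ≤ #{j | x j ≠ 0} := card_image_le

theorem card_ne_zero_le_card_bucketSum_ne_zero_add_card_collisions [DecidableEq α] (h : α → β)
    (x : α → M) :
    #{j | x j ≠ 0} ≤ #{i | bucketSum h x i ≠ 0} + #(collisions h {j | x j ≠ 0}) := by
  set S : Finset α := {j | x j ≠ 0}
  set isolated := S.filter fun j => ¬ ∃ j' ∈ S, j' ≠ j ∧ h j' = h j
  have isolated_le : #isolated ≤ #{i | bucketSum h x i ≠ 0} := by
    refine card_le_card_of_injOn h (fun j hj => ?_) (fun j hj j' hj' hjj' => ?_)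
    · rw [mem_coe, mem_filter] at hj
      have : bucketSum h x (h j) = x j :=
        sum_eq_single_of_mem j (by simp) fun b hb hbj => by
          by_contra hxb
          exact hj.2 ⟨b, by simpa [S] using hxb, hbj, by simpa using hb⟩
      simpa [this, S] using hj.1
    · rw [mem_coe, mem_filter] at hj hj'
      by_contra hne
      exact hj'.2 ⟨j, hj.1, hne, hjj'⟩
  calc #S = #isolated + #(collisions h S) := by
        rw [add_comm]; exact (card_filter_add_card_filter_not _).symm
    _ ≤ #{i | bucketSum h x i ≠ 0} + #(collisions h S) := Nat.add_le_add_right isolated_le _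

theorem card_filter_card_bucketSum_ne_zero_lt_mul_card_le [DecidableEq α] {ℓ : ℝ} (hℓ : 0 < ℓ)
    (x : α → M) :
    (#{h : α → β | (#{i | bucketSum h x i ≠ 0} : ℝ) < (1 - 1 / ℓ) * #{j | x j ≠ 0}} : ℝ)
      * Fintype.card β ≤ ℓ * #{j | x j ≠ 0} * Fintype.card β ^ Fintype.card α := by
  set S : Finset α := {j | x j ≠ 0}
  set F : Finset (α → β) := {h : α → β | (#{i | bucketSum h x i ≠ 0} : ℝ) < (1 - 1 / ℓ) * #S}
  rcases (#S).eq_zero_or_pos with hS | hS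
  · have : F = ∅ := filter_eq_empty_iff.2 fun h _ => by simp [hS]
    simp [this, hS]
  have lossy_collides : ∀ h ∈ F, (#S : ℝ) ≤ ℓ * #(collisions h S) := fun h hh => by
    have lost : (#S : ℝ) ≤ #{i | bucketSum h x i ≠ 0} + #(collisions h S) := by
      exact_mod_cast card_ne_zero_le_card_bucketSum_ne_zero_add_card_collisions h x
    have : (#S : ℝ) / ℓ ≤ #(collisions h S) := by
      have := (mem_filter.1 hh).2
      rw [sub_mul, one_div_mul_eq_div] at this
      linarith
    rwa [div_le_iff₀' hℓ] at this
  have expected : (Fintype.card β : ℝ) * ∑ h : α → β, (#(collisions h S) : ℝ)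
      ≤ #S ^ 2 * Fintype.card β ^ Fintype.card α := by
    exact_mod_cast card_mul_sum_card_collisions_le S
  refine le_of_mul_le_mul_right ?_ (by exact_mod_cast hS : (0 : ℝ) < #S)
  calc (#F : ℝ) * Fintype.card β * #S = Fintype.card β * ∑ _h ∈ F, (#S : ℝ) := by
        rw [sum_const, nsmul_eq_mul]; ring
    _ ≤ Fintype.card β * ∑ h ∈ F, ℓ * #(collisions h S) := by
        gcongr with h hh
        exact lossy_collides h hh
    _ ≤ Fintype.card β * ∑ h : α → β, ℓ * #(collisions h S) := by
        gcongr
        exact subset_univ F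
    _ = ℓ * (Fintype.card β * ∑ h : α → β, (#(collisions h S) : ℝ)) := by rw [← mul_sum]; ring
    _ ≤ ℓ * (#S ^ 2 * Fintype.card β ^ Fintype.card α) := by gcongr
    _ = ℓ * #S * Fintype.card β ^ Fintype.card α * #S := by ring

theorem one_sub_one_div_le_card_filter_card_bucketSum_ne_zero_ge_div [DecidableEq α]
    [Nonempty β] {ℓ ℓ' : ℝ} (hℓ : 0 < ℓ) (hℓ' : 0 < ℓ') (x : α → M)
    (hcard : (#{j | x j ≠ 0} : ℝ) * ℓ * ℓ' ≤ Fintype.card β) :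
    1 - 1 / ℓ' ≤
      (#{h : α → β | (1 - 1 / ℓ) * #{j | x j ≠ 0} ≤ (#{i | bucketSum h x i ≠ 0} : ℝ)} : ℝ)
        / Fintype.card (α → β) := by
  refine one_sub_one_div_le_card_filter_div _ hℓ' ?_
  have lossy := card_filter_card_bucketSum_ne_zero_lt_mul_card_le (β := β) hℓ x
  simp only [not_le, Fintype.card_fun, Nat.cast_pow] at lossy ⊢
  refine le_of_mul_le_mul_right ?_
    (by exact_mod_cast Fintype.card_pos : (0 : ℝ) < Fintype.card β)
  linear_combination ℓ' * lossy + (Fintype.card β : ℝ) ^ Fintype.card α * hcard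

end Buckets

end BucketHash

theorem stmt2_general (n m : ℕ) (hm : 1 ≤ m) (ℓ ℓ' : ℝ) (hℓ : 1 ≤ ℓ) (hℓ' : 1 ≤ ℓ')
    (x : Fin n → ℝ)
    (hcard : ((Finset.univ.filter (fun j : Fin n => x j ≠ 0)).card : ℝ) * ℓ * ℓ' ≤ (m : ℝ)) :
    1 - 1 / ℓ' ≤
      ((Finset.univ.filter (fun h : Fin n → Fin m =>
          ((Finset.univ.filter (fun i : Fin m =>
              (∑ j ∈ Finset.univ.filter (fun j : Fin n => h j = i), x j) ≠ 0)).card : ℝ)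
            ≤ ((Finset.univ.filter (fun j : Fin n => x j ≠ 0)).card : ℝ) ∧
          (1 - 1 / ℓ) * ((Finset.univ.filter (fun j : Fin n => x j ≠ 0)).card : ℝ) ≤
            ((Finset.univ.filter (fun i : Fin m =>
              (∑ j ∈ Finset.univ.filter (fun j : Fin n => h j = i), x j) ≠ 0)).card : ℝ))).card : ℝ) /
        (Fintype.card (Fin n → Fin m) : ℝ) := by
  have : Nonempty (Fin m) := ⟨⟨0, hm⟩⟩
  rw [filter_congr fun h _ => and_iff_right
    (by exact_mod_cast BucketHash.card_bucketSum_ne_zero_le h x)]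
  exact BucketHash.one_sub_one_div_le_card_filter_card_bucketSum_ne_zero_ge_div (by linarith)
    (by linarith) x (by simpa using hcard)

/-- Domain Reduction Lemma 3: if `m ≥ ‖x‖₀ · ℓ · ℓ'` with `ℓ, ℓ' ≥ 1`, then for a
uniformly random `h : [n] → [m]`, with probability at least `1 - 1/ℓ'` the vector
`f_h(x)` with `f_h(x)_i = ∑_{h(j)=i} x_j` satisfies `‖x‖₀ ≥ ‖f_h(x)‖₀ ≥ (1 - 1/ℓ)‖x‖₀`. -/
theorem stmt2 (n m : ℕ) (hn : 1 ≤ n) (hm : 1 ≤ m) (ℓ ℓ' : ℝ) (hℓ : 1 ≤ ℓ) (hℓ' : 1 ≤ ℓ')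
    (x : Fin n → ℝ)
    (hcard : ((Finset.univ.filter (fun j : Fin n => x j ≠ 0)).card : ℝ) * ℓ * ℓ' ≤ (m : ℝ)) :
    1 - 1 / ℓ' ≤
      ((Finset.univ.filter (fun h : Fin n → Fin m =>
          ((Finset.univ.filter (fun i : Fin m =>
              (∑ j ∈ Finset.univ.filter (fun j : Fin n => h j = i), x j) ≠ 0)).card : ℝ)
            ≤ ((Finset.univ.filter (fun j : Fin n => x j ≠ 0)).card : ℝ) ∧
          (1 - 1 / ℓ) * ((Finset.univ.filter (fun j : Fin n => x j ≠ 0)).card : ℝ) ≤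
            ((Finset.univ.filter (fun i : Fin m =>
              (∑ j ∈ Finset.univ.filter (fun j : Fin n => h j = i), x j) ≠ 0)).card : ℝ))).card : ℝ) /
        (Fintype.card (Fin n → Fin m) : ℝ) :=
  stmt2_general n m hm ℓ ℓ' hℓ hℓ' x hcard
end

section
/- Let T ≥ 2 and n ≥ 2 be integers, let ε ≥ 0 and δ ∈ [0,1]. Let M be a mechanism assigning to every stream S of length T over universe [n] a Borel probability measure M(S) on ℝ, and suppose M is (ε,δ)-differentially private, i.e., for all neighboring streams S, S' and all Borel sets O ⊆ ℝ, M(S)(O) ≤ e^ε·M(S')(O) + δ. Then there exists a stream S₀ of length T over [n] such that M(S₀)({r ∈ ℝ : |r − F₂(S₀)| ≥ T − 1}) ≥ (1 − δ)/(e^ε + 1). -/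
open Finset MeasureTheory
open scoped Classical

/-- A stream of length `T` over universe `[n]`: each update is a pair `(a, s)` with
`a ∈ [n]` and `s ∈ {-1, 0, 1}`. -/
def IsStream {T n : ℕ} (S : Fin T → Fin n × ℤ) : Prop :=
  ∀ i, (S i).2 = -1 ∨ (S i).2 = 0 ∨ (S i).2 = 1

/-- Event-level neighboring streams: they differ in at most one index. -/
def Neighboring {T n : ℕ} (S S' : Fin T → Fin n × ℤ) : Prop :=
  ∀ i j, S i ≠ S' i → S j ≠ S' j → i = j

/-- The second frequency moment `F₂(S) = ∑_j (∑_{i : aᵢ = j} sᵢ)²`. -/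
noncomputable def F2 {T n : ℕ} (S : Fin T → Fin n × ℤ) : ℤ :=
  ∑ j : Fin n, (∑ i ∈ Finset.univ.filter (fun i : Fin T => (S i).1 = j), (S i).2) ^ 2

/-! The stream of `T` insertions of one item has `F₂ = T²`; zeroing its first update gives a
neighboring stream with `F₂ = (T - 1)²`. These values are `2T - 1` apart, so no output is within
`T - 1` of both. Applying the privacy inequality to the event "within `T - 1` of `T²`" then forces
one of the two streams to err by at least `T - 1` with probability `(1 - δ)/(e^ε + 1)`. -/

lemma le_abs_sub_of_abs_sub_lt {G : Type*} [AddCommGroup G] [LinearOrder G] [IsOrderedAddMonoid G]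
    {x y r d : G} (hxy : d + d ≤ |x - y|) (hr : |r - x| < d) : d ≤ |r - y| := by
  rw [abs_sub_comm] at hr
  by_contra! h
  exact (add_lt_add hr h).not_ge (hxy.trans (abs_sub_le x r y))

lemma le_measure_or_le_measure_of_compl_le {α : Type*} [MeasurableSpace α] {μ ν : Measure α}
    [IsProbabilityMeasure μ] [IsFiniteMeasure ν] {A B : Set α} (hA : MeasurableSet A)
    (hAB : Aᶜ ⊆ B) {k δ : ℝ} (hk : 0 ≤ k) (hδ : 0 ≤ δ)
    (h : μ Aᶜ ≤ ENNReal.ofReal k * ν Aᶜ + ENNReal.ofReal δ) :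
    ENNReal.ofReal ((1 - δ) / (k + 1)) ≤ μ A ∨ ENNReal.ofReal ((1 - δ) / (k + 1)) ≤ ν B := by
  by_contra! hlt
  have hμA : μ.real A < (1 - δ) / (k + 1) := ENNReal.toReal_lt_of_lt_ofReal hlt.1
  have hνB : ν.real B < (1 - δ) / (k + 1) := ENNReal.toReal_lt_of_lt_ofReal hlt.2
  have hreal : μ.real Aᶜ ≤ k * ν.real Aᶜ + δ := by
    have := ENNReal.toReal_mono (by finiteness) h
    rwa [ENNReal.toReal_add (by finiteness) (by finiteness), ENNReal.toReal_mul,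
      ENNReal.toReal_ofReal hk, ENNReal.toReal_ofReal hδ] at this
  have hcompl : μ.real Aᶜ = 1 - μ.real A := by simp [measureReal_compl hA]
  have hmono : ν.real Aᶜ ≤ ν.real B := measureReal_mono hAB
  have hc : (1 - δ) / (k + 1) * (k + 1) = 1 - δ := div_mul_cancel₀ _ (by positivity)
  -- `1 = μ A + μ Aᶜ < c + k c + δ = 1` with `c = (1 - δ)/(k + 1)`
  nlinarith [mul_le_mul_of_nonneg_left hmono hk, mul_le_mul_of_nonneg_left hνB.le hk]

lemma F2_fst_const {T n : ℕ} (a : Fin n) (s : Fin T → ℤ) :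
    F2 (fun i => (a, s i)) = (∑ i, s i) ^ 2 := by
  unfold F2
  rw [Finset.sum_eq_single a]
  · rw [Finset.filter_true_of_mem fun _ _ => rfl]
  · intro b _ hb
    rw [Finset.filter_false_of_mem fun _ _ => Ne.symm hb]
    simp
  · simp

lemma neighboring_of_forall_ne {T n : ℕ} {S S' : Fin T → Fin n × ℤ} (i₀ : Fin T)
    (h : ∀ i ≠ i₀, S i = S' i) : Neighboring S S' := by
  intro i j hi hj
  rw [not_imp_comm.mp (h i) hi, not_imp_comm.mp (h j) hj]

lemma exists_neighboring_F2_eq_sq {T n : ℕ} (hT : 0 < T) (hn : 0 < n) :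
    ∃ S S' : Fin T → Fin n × ℤ, IsStream S ∧ IsStream S' ∧ Neighboring S S' ∧
      F2 S = (T : ℤ) ^ 2 ∧ F2 S' = ((T : ℤ) - 1) ^ 2 := by
  let a : Fin n := ⟨0, hn⟩
  let i₀ : Fin T := ⟨0, hT⟩
  let s' : Fin T → ℤ := Function.update 1 i₀ 0
  refine ⟨fun _ => (a, 1), fun i => (a, s' i), fun _ => Or.inr (Or.inr rfl), fun i => ?_,
    neighboring_of_forall_ne i₀ fun i hi => by simp [s', hi], ?_, ?_⟩
  · rcases eq_or_ne i i₀ with rfl | hi <;> simp [s', *]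
  · simpa using F2_fst_const a 1
  · rw [F2_fst_const, Finset.sum_update_of_mem (Finset.mem_univ _)]
    simp [Finset.card_sdiff, Nat.cast_sub hT]

theorem stmt4_general (T n : ℕ) (hT : 2 ≤ T) (hn : 2 ≤ n) (ε δ : ℝ)
    (hδ : δ ∈ Set.Icc (0 : ℝ) 1)
    (M : (Fin T → Fin n × ℤ) → Measure ℝ)
    (hM : ∀ S, IsStream S → IsProbabilityMeasure (M S))
    (hDP : ∀ S S', IsStream S → IsStream S' → Neighboring S S' →
      ∀ O : Set ℝ, MeasurableSet O →
        M S O ≤ ENNReal.ofReal (Real.exp ε) * M S' O + ENNReal.ofReal δ) :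
    ∃ S₀ : Fin T → Fin n × ℤ, IsStream S₀ ∧
      ENNReal.ofReal ((1 - δ) / (Real.exp ε + 1)) ≤
        M S₀ {r : ℝ | (T : ℝ) - 1 ≤ |r - (F2 S₀ : ℝ)|} := by
  obtain ⟨S, S', hS, hS', hSS', hF2S, hF2S'⟩ := exists_neighboring_F2_eq_sq
    (by omega : 0 < T) (by omega : 0 < n)
  have := hM S hS
  have := hM S' hS'
  set A := {r : ℝ | (T : ℝ) - 1 ≤ |r - (F2 S : ℝ)|}
  have hA : MeasurableSet A := measurableSet_le measurable_const (measurable_id.sub_const _).abs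
  have hAB : Aᶜ ⊆ {r : ℝ | (T : ℝ) - 1 ≤ |r - (F2 S' : ℝ)|} := by
    intro r hr
    have hr : |r - (F2 S : ℝ)| < T - 1 := not_le.mp hr
    refine le_abs_sub_of_abs_sub_lt ?_ hr
    rw [hF2S, hF2S']
    have : (2 : ℝ) ≤ T := by exact_mod_cast hT
    push_cast
    rw [abs_of_nonneg (by nlinarith)]
    linarith
  rcases le_measure_or_le_measure_of_compl_le hA hAB (Real.exp_pos ε).le hδ.1
    (hDP S S' hS hS' hSS' _ hA.compl) with h | h
  exacts [⟨S, hS, h⟩, ⟨S', hS', h⟩]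

/-- Any `(ε,δ)`-DP mechanism for `F₂` on turnstile streams of length `T` must, on some
stream `S₀`, output a value at additive distance at least `T - 1` from `F₂(S₀)` with
probability at least `(1-δ)/(e^ε + 1)`. -/
theorem stmt4 (T n : ℕ) (hT : 2 ≤ T) (hn : 2 ≤ n) (ε δ : ℝ) (hε : 0 ≤ ε)
    (hδ : δ ∈ Set.Icc (0 : ℝ) 1)
    (M : (Fin T → Fin n × ℤ) → Measure ℝ)
    (hM : ∀ S, IsStream S → IsProbabilityMeasure (M S))
    (hDP : ∀ S S', IsStream S → IsStream S' → Neighboring S S' →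
      ∀ O : Set ℝ, MeasurableSet O →
        M S O ≤ ENNReal.ofReal (Real.exp ε) * M S' O + ENNReal.ofReal δ) :
    ∃ S₀ : Fin T → Fin n × ℤ, IsStream S₀ ∧
      ENNReal.ofReal ((1 - δ) / (Real.exp ε + 1)) ≤
        M S₀ {r : ℝ | (T : ℝ) - 1 ≤ |r - (F2 S₀ : ℝ)|} :=
  stmt4_general T n hT hn ε δ hδ M hM hDP
end

section
/- Let ℓ > 0 be a real number, let S be a nonempty finite set with |S| ≥ ℓ/2, and let (x_j)_{j ∈ S} be real numbers with |x_j| ≥ 1 for every j ∈ S. Let (g_j)_{j ∈ S} be independent uniformly random signs in {−1,+1}. Then for every interval I ⊆ ℝ of length at most 1, Pr[ Σ_{j ∈ S} g_j·x_j ∈ I ] ≤ 50/√ℓ. -/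
/-!
Erdős's proof of the Littlewood–Offord bound. Record a sign vector `g` by the set `B` of indices
where `g j * x j > 0`; the signed sum is then `∑_{j ∈ B} |x j| - ∑_{j ∉ B} |x j|`. Enlarging `B`
strictly raises this by at least `2`, so the sign vectors whose sum lands in an interval of length
less than `2` form an antichain, and Sperner's theorem bounds their number by `C(n, ⌊n/2⌋)`,
which is at most `2ⁿ / √n`.
-/

open Finset
open scoped Classical

namespace Nat

theorem centralBinom_sq_mul_le (m : ℕ) : centralBinom m ^ 2 * (3 * m + 1) ≤ 16 ^ m := by
  induction m with
  | zero => simp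
  | succ m ih =>
    refine Nat.le_of_mul_le_mul_left ?_ (by positivity : 0 < (m + 1) ^ 2 * (3 * m + 1))
    calc (m + 1) ^ 2 * (3 * m + 1) * (centralBinom (m + 1) ^ 2 * (3 * (m + 1) + 1))
        = (3 * m + 1) * (3 * m + 4) * ((m + 1) * centralBinom (m + 1)) ^ 2 := by ring
      _ = (3 * m + 4) * (2 * (2 * m + 1)) ^ 2 * (centralBinom m ^ 2 * (3 * m + 1)) := by
          rw [succ_mul_centralBinom_succ]; ring
      _ ≤ (3 * m + 4) * (2 * (2 * m + 1)) ^ 2 * 16 ^ m := Nat.mul_le_mul_left _ ih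
      _ ≤ (m + 1) ^ 2 * (3 * m + 1) * 16 * 16 ^ m := Nat.mul_le_mul_right _ (by nlinarith)
      _ = (m + 1) ^ 2 * (3 * m + 1) * 16 ^ (m + 1) := by ring

theorem choose_two_mul_add_one_le (m : ℕ) : (2 * m + 1).choose m ≤ 2 * centralBinom m := by
  have hsymm : (2 * m + 1).choose (m + 1) = (2 * m + 1).choose m := by
    simpa [show 2 * m + 1 - m = m + 1 by omega] using choose_symm (show m ≤ 2 * m + 1 by omega)
  have hpascal : centralBinom (m + 1) = (2 * m + 1).choose m + (2 * m + 1).choose (m + 1) := by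
    rw [centralBinom_eq_two_mul_choose, show 2 * (m + 1) = 2 * m + 1 + 1 by ring, choose_succ_succ]
  have hstep : centralBinom (m + 1) ≤ 4 * centralBinom m := by
    refine Nat.le_of_mul_le_mul_left ?_ (succ_pos m)
    rw [succ_mul_centralBinom_succ]
    nlinarith
  omega

theorem choose_half_sq_mul_le (n : ℕ) : n.choose (n / 2) ^ 2 * n ≤ 4 ^ n := by
  obtain ⟨m, rfl | rfl⟩ := n.even_or_odd'
  · rw [show 2 * m / 2 = m by omega, ← centralBinom_eq_two_mul_choose, pow_mul]
    calc centralBinom m ^ 2 * (2 * m) ≤ centralBinom m ^ 2 * (3 * m + 1) := by gcongr; omega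
      _ ≤ (4 ^ 2) ^ m := centralBinom_sq_mul_le m
  · rw [show (2 * m + 1) / 2 = m by omega, pow_succ (4 : ℕ), pow_mul]
    calc (2 * m + 1).choose m ^ 2 * (2 * m + 1) ≤ (2 * centralBinom m) ^ 2 * (3 * m + 1) := by
          gcongr
          · exact choose_two_mul_add_one_le m
          · omega
      _ = centralBinom m ^ 2 * (3 * m + 1) * 4 := by ring
      _ ≤ (4 ^ 2) ^ m * 4 := by gcongr; exact centralBinom_sq_mul_le m

theorem choose_half_mul_sqrt_le (n : ℕ) : (n.choose (n / 2) : ℝ) * √n ≤ 2 ^ n := by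
  rw [← Real.sqrt_sq (by positivity : (0 : ℝ) ≤ 2 ^ n), ← Real.sqrt_sq (Nat.cast_nonneg _),
    ← Real.sqrt_mul (by positivity)]
  refine Real.sqrt_le_sqrt ?_
  rw [← pow_mul, mul_comm n, pow_mul]
  exact_mod_cast choose_half_sq_mul_le n

end Nat

section LittlewoodOfford

variable {S : Type*} [Fintype S]

theorem sum_ite_mem_add_two_le {w : S → ℝ} (hw : ∀ j, 1 ≤ w j) {B C : Finset S} (hBC : B ⊂ C) :
    ∑ j, (if j ∈ B then w j else -w j) + 2 ≤ ∑ j, (if j ∈ C then w j else -w j) := by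
  obtain ⟨j₀, hj₀C, hj₀B⟩ := exists_of_ssubset hBC
  have hterm : ∀ j ∈ univ, 0 ≤ (if j ∈ C then w j else -w j) - (if j ∈ B then w j else -w j) := by
    intro j _
    have := hw j
    split_ifs with hC hB hB <;> first | linarith | exact absurd (hBC.subset hB) hC
  have hj₀ : 2 ≤ (if j₀ ∈ C then w j₀ else -w j₀) - (if j₀ ∈ B then w j₀ else -w j₀) := by
    rw [if_pos hj₀C, if_neg hj₀B]; linarith [hw j₀]
  have := hj₀.trans (single_le_sum hterm (mem_univ j₀))
  rw [sum_sub_distrib] at this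
  linarith

theorem isAntichain_setOf_sum_ite_mem_Icc {w : S → ℝ} (hw : ∀ j, 1 ≤ w j) {a b : ℝ}
    (hab : b - a < 2) :
    IsAntichain (· ⊆ ·) {B : Finset S | ∑ j, (if j ∈ B then w j else -w j) ∈ Set.Icc a b} := by
  intro B hB C hC hne hBC
  have := sum_ite_mem_add_two_le hw (ssubset_of_subset_of_ne hBC hne)
  linarith [hB.1, hC.2]

noncomputable def positiveSigns (x : S → ℝ) (g : S → Bool) : Finset S :=
  univ.filter fun j => 0 < (if g j then (1 : ℝ) else -1) * x j

theorem sign_mul_eq_ite_mem_positiveSigns (x : S → ℝ) (g : S → Bool) (j : S) :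
    (if g j then (1 : ℝ) else -1) * x j =
      if j ∈ positiveSigns x g then |x j| else -|x j| := by
  have habs : |(if g j then (1 : ℝ) else -1) * x j| = |x j| := by
    split_ifs <;> simp
  have hmem : j ∈ positiveSigns x g ↔ 0 < (if g j then (1 : ℝ) else -1) * x j := by
    simp [positiveSigns]
  generalize (if g j then (1 : ℝ) else -1) * x j = t at habs hmem ⊢
  rw [← habs]
  by_cases ht : 0 < t
  · rw [if_pos (hmem.2 ht), abs_of_pos ht]
  · rw [if_neg (mt hmem.1 ht), abs_of_nonpos (not_lt.1 ht), neg_neg]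

theorem positiveSigns_injective {x : S → ℝ} (hx : ∀ j, x j ≠ 0) :
    Function.Injective (positiveSigns x) := by
  intro g g' h
  funext j
  have hj : (0 < (if g j then (1 : ℝ) else -1) * x j) ↔
      (0 < (if g' j then (1 : ℝ) else -1) * x j) := by
    simpa [positiveSigns] using congrArg (j ∈ ·) h
  rcases (hx j).lt_or_gt with hxj | hxj <;>
    cases hg : g j <;> cases hg' : g' j <;> simp [hg, hg', hxj, not_lt_of_gt hxj] at hj ⊢

theorem card_sign_sum_mem_Icc_le_choose {x : S → ℝ} (hx : ∀ j, 1 ≤ |x j|) {a b : ℝ}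
    (hab : b - a < 2) :
    #(univ.filter fun g : S → Bool => (∑ j, (if g j then (1 : ℝ) else -1) * x j) ∈ Set.Icc a b) ≤
      (Fintype.card S).choose (Fintype.card S / 2) := by
  set A := univ.filter fun g : S → Bool =>
    (∑ j, (if g j then (1 : ℝ) else -1) * x j) ∈ Set.Icc a b
  have hinj := positiveSigns_injective fun j => abs_pos.1 (one_pos.trans_le (hx j))
  rw [← card_image_of_injective A hinj]
  refine IsAntichain.sperner ((isAntichain_setOf_sum_ite_mem_Icc hx hab).subset ?_)
  intro B hB
  obtain ⟨g, hg, rfl⟩ := mem_image.1 hB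
  have hsum := (mem_filter.1 hg).2
  simp only [sign_mul_eq_ite_mem_positiveSigns] at hsum
  exact hsum

end LittlewoodOfford

theorem stmt8_general (S : Type*) [Fintype S] (ℓ : ℝ) (hℓ : 0 < ℓ)
    (hcard : ℓ / 2 ≤ (Fintype.card S : ℝ)) (x : S → ℝ) (hx : ∀ j, 1 ≤ |x j|)
    (a b : ℝ) (hab : b - a ≤ 1) :
    ((Finset.univ.filter (fun g : S → Bool =>
        (∑ j, (if g j then (1 : ℝ) else -1) * x j) ∈ Set.Icc a b)).card : ℝ) /
      (Fintype.card (S → Bool) : ℝ) ≤ 50 / Real.sqrt ℓ := by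
  set n := Fintype.card S
  have hcount := card_sign_sum_mem_Icc_le_choose hx (a := a) (b := b) (by linarith)
  have hpow : (Fintype.card (S → Bool) : ℝ) = 2 ^ n := by simp [n]
  have hsqrt : √ℓ ≤ √2 * √n := by
    rw [← Real.sqrt_mul zero_le_two]; exact Real.sqrt_le_sqrt (by linarith)
  have hsqrt2 : √2 ≤ 50 := by
    rw [Real.sqrt_le_left (by norm_num)]; norm_num
  rw [hpow, div_le_div_iff₀ (by positivity) (Real.sqrt_pos.2 hℓ)]
  calc _ ≤ (n.choose (n / 2) : ℝ) * (√2 * √n) :=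
        mul_le_mul (by exact_mod_cast hcount) hsqrt (by positivity) (by positivity)
    _ = √2 * ((n.choose (n / 2) : ℝ) * √n) := by ring
    _ ≤ 50 * 2 ^ n := by gcongr; exact Nat.choose_half_mul_sqrt_le n

/-- Erdős–Littlewood–Offord-type anti-concentration: for a nonempty finite index set `S`
with `|S| ≥ ℓ/2`, coefficients `|x_j| ≥ 1`, and independent uniform random signs `g`,
the signed sum lands in any interval of length at most `1` with probability at most
`50/√ℓ`. -/
theorem stmt8 (S : Type*) [Fintype S] [Nonempty S] (ℓ : ℝ) (hℓ : 0 < ℓ)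
    (hcard : ℓ / 2 ≤ (Fintype.card S : ℝ)) (x : S → ℝ) (hx : ∀ j, 1 ≤ |x j|)
    (a b : ℝ) (hab : b - a ≤ 1) :
    ((Finset.univ.filter (fun g : S → Bool =>
        (∑ j, (if g j then (1 : ℝ) else -1) * x j) ∈ Set.Icc a b)).card : ℝ) /
      (Fintype.card (S → Bool) : ℝ) ≤ 50 / Real.sqrt ℓ :=
  stmt8_general S ℓ hℓ hcard x hx a b hab
end

section
/- Let n ≥ 2 and m ≥ 1 be integers, let ℓ be a real number with ℓ ≥ 100·log₂(n), and let A ⊆ [n] with |A| ≥ ℓ·m. Let h : [n] → [m] be a uniformly random function. Then for every fixed index i ∈ [m], Pr[ |{j ∈ A : h(j) = i}| ≥ ℓ/2 ] ≥ 0.999. -/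
open Finset
open scoped Classical

/-- The key moment-generating-function computation: the sum over all functions
`h : Fin n → Fin m` of `exp (-(number of j ∈ A with h j = i)))` factors as a product. -/
lemma stmt9_sum_exp (n m : ℕ) (A : Finset (Fin n)) (i : Fin m) :
    ∑ h : Fin n → Fin m, Real.exp (-((A.filter (fun j => h j = i)).card : ℝ))
      = ((m : ℝ) - 1 + Real.exp (-1)) ^ A.card * (m : ℝ) ^ (n - A.card) := by
  have hterm : ∀ h : Fin n → Fin m,
      Real.exp (-((A.filter (fun j => h j = i)).card : ℝ))
        = ∏ j : Fin n, (if j ∈ A then (if h j = i then Real.exp (-1) else 1) else 1) := by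
    intro h
    rw [Fintype.prod_ite_mem A (fun j => if h j = i then Real.exp (-1) else 1)]
    rw [← Finset.prod_filter (fun j => h j = i) (fun _ => Real.exp (-1))]
    rw [Finset.prod_const, ← Real.exp_nat_mul]
    ring_nf
  calc ∑ h : Fin n → Fin m, Real.exp (-((A.filter (fun j => h j = i)).card : ℝ))
      = ∑ h : Fin n → Fin m, ∏ j : Fin n,
          (if j ∈ A then (if h j = i then Real.exp (-1) else 1) else 1) := by
        exact Finset.sum_congr rfl (fun h _ => hterm h)
    _ = ∏ j : Fin n, ∑ x : Fin m,
          (if j ∈ A then (if x = i then Real.exp (-1) else 1) else 1) := by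
        rw [Finset.prod_univ_sum (fun _ => (Finset.univ : Finset (Fin m)))
          (fun j x => if j ∈ A then (if x = i then Real.exp (-1) else 1) else 1)]
        rw [Fintype.piFinset_univ]
    _ = ∏ j : Fin n, (if j ∈ A then ((m : ℝ) - 1 + Real.exp (-1)) else (m : ℝ)) := by
        refine Finset.prod_congr rfl (fun j _ => ?_)
        by_cases hj : j ∈ A
        · simp only [hj, if_true]
          have : ∀ x : Fin m, (if x = i then Real.exp (-1) else 1)
              = (if x = i then Real.exp (-1) - 1 else 0) + 1 := by
            intro x; split <;> ring
          rw [Finset.sum_congr rfl (fun x _ => this x), Finset.sum_add_distrib,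
            Finset.sum_ite_eq' Finset.univ i (fun _ => Real.exp (-1) - 1)]
          simp [Finset.card_univ]
          ring
        · simp [hj, Finset.card_univ]
    _ = ((m : ℝ) - 1 + Real.exp (-1)) ^ A.card * (m : ℝ) ^ (n - A.card) := by
        rw [Finset.prod_ite, Finset.prod_const, Finset.prod_const]
        congr 1
        · congr 1
          simp [Finset.filter_univ_mem]
        · congr 1
          have : Finset.univ.filter (fun j : Fin n => ¬ j ∈ A) = Aᶜ := by
            ext j; simp
          rw [this, Finset.card_compl, Fintype.card_fin]

/-- If `|A| ≥ ℓ·m` with `ℓ ≥ 100 log₂ n`, then for a uniformly random `h : [n] → [m]`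
and any fixed bucket `i`, at least `ℓ/2` elements of `A` hash to `i` with probability
at least `0.999`. -/
theorem stmt9 (n m : ℕ) (hn : 2 ≤ n) (hm : 1 ≤ m) (ℓ : ℝ)
    (hℓ : 100 * Real.logb 2 n ≤ ℓ) (A : Finset (Fin n))
    (hA : ℓ * (m : ℝ) ≤ (A.card : ℝ)) (i : Fin m) :
    (0.999 : ℝ) ≤
      ((Finset.univ.filter (fun h : Fin n → Fin m =>
          ℓ / 2 ≤ ((A.filter (fun j => h j = i)).card : ℝ))).card : ℝ) /
        (Fintype.card (Fin n → Fin m) : ℝ) := by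
  set c : ℝ := Real.exp (-1) with hc
  have hm0 : (0 : ℝ) < m := by exact_mod_cast hm
  have hc0 : 0 < c := Real.exp_pos _
  have hc37 : c < 0.375 := by
    have h1 : (2.7 : ℝ) < Real.exp 1 := by
      have := Real.exp_one_gt_d9; linarith
    have h2 : Real.exp (-1) = 1 / Real.exp 1 := by
      rw [Real.exp_neg]; ring
    rw [hc, h2, div_lt_iff₀ (by linarith)]
    nlinarith
  -- ℓ ≥ 100
  have hl100 : (100 : ℝ) ≤ ℓ := by
    have h2 : (1 : ℝ) ≤ Real.logb 2 n := by
      have h0 := Real.logb_self_eq_one (b := 2) (by norm_num)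
      rw [← h0]
      exact Real.logb_le_logb_of_le (by norm_num) (by norm_num) (by exact_mod_cast hn)
    nlinarith
  have hl0 : 0 < ℓ := by linarith
  -- ℓ ≤ N/m and N ≤ n
  set N : ℕ := A.card with hN
  have hNn : N ≤ n := by
    simpa [Fintype.card_fin] using A.card_le_univ.trans_eq (by simp)
  have hlNm : ℓ * m ≤ N := hA
  -- the bad set
  set f : (Fin n → Fin m) → ℝ := fun h => ((A.filter (fun j => h j = i)).card : ℝ) with hf
  set G := Finset.univ.filter (fun h : Fin n → Fin m => ℓ / 2 ≤ f h) with hG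
  set B := Finset.univ.filter (fun h : Fin n → Fin m => ¬ ℓ / 2 ≤ f h) with hB
  have hGB : G.card + B.card = m ^ n := by
    rw [hG, hB, Finset.card_filter_add_card_filter_not]
    simp [Finset.card_univ, Fintype.card_fun]
  -- Markov / Chernoff step
  have hsum : ∑ h : Fin n → Fin m, Real.exp (-(f h))
      = ((m : ℝ) - 1 + c) ^ N * (m : ℝ) ^ (n - N) := stmt9_sum_exp n m A i
  have hmarkov : (B.card : ℝ) * Real.exp (-(ℓ/2)) ≤ ∑ h : Fin n → Fin m, Real.exp (-(f h)) := by
    have h1 : (B.card : ℝ) * Real.exp (-(ℓ/2)) = ∑ _h ∈ B, Real.exp (-(ℓ/2)) := by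
      rw [Finset.sum_const]; ring
    rw [h1]
    refine le_trans (Finset.sum_le_sum ?_) (Finset.sum_le_sum_of_subset_of_nonneg
      (Finset.subset_univ B) (fun h _ _ => (Real.exp_pos _).le))
    intro h hh
    rw [hB, Finset.mem_filter] at hh
    exact Real.exp_le_exp.mpr (by linarith [lt_of_not_ge hh.2])
  -- bound the factored sum
  have hbound : ((m : ℝ) - 1 + c) ^ N * (m : ℝ) ^ (n - N)
      ≤ (m : ℝ) ^ n * Real.exp (-(1 - c) * ℓ) := by
    have hbase : (m : ℝ) - 1 + c = m * (1 - (1 - c) / m) := by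
      field_simp; ring
    have hb0 : 0 ≤ 1 - (1 - c) / m := by
      rw [sub_nonneg, div_le_one hm0]
      have : (1 : ℝ) ≤ m := by exact_mod_cast hm
      linarith
    have hexp : 1 - (1 - c) / m ≤ Real.exp (-(1 - c) / m) := by
      have h := Real.add_one_le_exp (-(1 - c) / (m:ℝ))
      rw [neg_div] at h ⊢
      linarith
    calc ((m : ℝ) - 1 + c) ^ N * (m : ℝ) ^ (n - N)
        = (m : ℝ) ^ N * (1 - (1 - c) / m) ^ N * (m : ℝ) ^ (n - N) := by
          rw [hbase, mul_pow]
      _ ≤ (m : ℝ) ^ N * Real.exp (-(1 - c) / m) ^ N * (m : ℝ) ^ (n - N) := by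
          apply mul_le_mul_of_nonneg_right _ (by positivity : (0:ℝ) ≤ (m : ℝ) ^ (n - N))
          apply mul_le_mul_of_nonneg_left _ (by positivity : (0:ℝ) ≤ (m : ℝ) ^ N)
          exact pow_le_pow_left₀ hb0 hexp N
      _ = (m : ℝ) ^ n * Real.exp ((-(1 - c) / m) * N) := by
          rw [← Real.exp_nat_mul]
          rw [show (m:ℝ)^N * Real.exp ((N:ℝ) * (-(1-c)/m)) * (m:ℝ)^(n-N)
            = ((m:ℝ)^N * (m:ℝ)^(n-N)) * Real.exp ((N:ℝ) * (-(1-c)/m)) by ring]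
          rw [← pow_add, Nat.add_sub_cancel' hNn]
          rw [mul_comm ((N:ℝ)) (-(1-c)/m)]
      _ ≤ (m : ℝ) ^ n * Real.exp (-(1 - c) * ℓ) := by
          apply mul_le_mul_of_nonneg_left _ (by positivity)
          apply Real.exp_le_exp.mpr
          rw [div_mul_eq_mul_div, div_le_iff₀ hm0]
          have hc1 : c < 1 := by linarith
          nlinarith
  -- conclude |B| small
  have hBsmall : (B.card : ℝ) ≤ (m : ℝ) ^ n * 0.001 := by
    have h1 : (B.card : ℝ) * Real.exp (-(ℓ/2)) ≤ (m : ℝ) ^ n * Real.exp (-(1 - c) * ℓ) := by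
      calc (B.card : ℝ) * Real.exp (-(ℓ/2)) ≤ _ := hmarkov
        _ = ((m : ℝ) - 1 + c) ^ N * (m : ℝ) ^ (n - N) := hsum
        _ ≤ _ := hbound
    have h2 : (B.card : ℝ) ≤ (m : ℝ) ^ n * Real.exp (-(1 - c) * ℓ) * Real.exp (ℓ/2) := by
      have he : Real.exp (-(ℓ/2)) * Real.exp (ℓ/2) = 1 := by
        rw [← Real.exp_add]; simp
      calc (B.card : ℝ) = B.card * Real.exp (-(ℓ/2)) * Real.exp (ℓ/2) := by
            rw [mul_assoc, he, mul_one]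
        _ ≤ (m : ℝ) ^ n * Real.exp (-(1 - c) * ℓ) * Real.exp (ℓ/2) :=
            mul_le_mul_of_nonneg_right h1 (Real.exp_pos _).le
    have h3 : (m : ℝ) ^ n * Real.exp (-(1 - c) * ℓ) * Real.exp (ℓ/2)
        = (m : ℝ) ^ n * Real.exp (ℓ/2 - (1 - c) * ℓ) := by
      rw [mul_assoc, ← Real.exp_add]
      ring_nf
    have h4 : Real.exp (ℓ/2 - (1 - c) * ℓ) ≤ 0.001 := by
      have harg : ℓ/2 - (1 - c) * ℓ ≤ -7 := by nlinarith
      have h5 : Real.exp (ℓ/2 - (1-c)*ℓ) ≤ Real.exp (-7) := Real.exp_le_exp.mpr harg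
      have h6 : Real.exp (-7 : ℝ) ≤ 0.001 := by
        rw [Real.exp_neg]
        rw [inv_le_comm₀ (Real.exp_pos _) (by norm_num)]
        have : ((2.7182818283 : ℝ)) ^ (7:ℕ) ≤ Real.exp 1 ^ (7:ℕ) :=
          pow_le_pow_left₀ (by norm_num) (le_of_lt Real.exp_one_gt_d9) 7
        rw [← Real.exp_nat_mul] at this
        norm_num at this ⊢
        linarith [this]
      linarith
    calc (B.card : ℝ) ≤ _ := h2
      _ = (m : ℝ) ^ n * Real.exp (ℓ/2 - (1 - c) * ℓ) := h3
      _ ≤ (m : ℝ) ^ n * 0.001 := by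
          apply mul_le_mul_of_nonneg_left h4 (by positivity)
  -- finish
  have hcard : (Fintype.card (Fin n → Fin m) : ℝ) = (m : ℝ) ^ n := by
    simp [Fintype.card_fun]
  rw [hcard, le_div_iff₀ (by positivity)]
  have hGcard : (G.card : ℝ) = (m : ℝ) ^ n - B.card := by
    have : (G.card : ℝ) + B.card = (m : ℝ) ^ n := by exact_mod_cast hGB
    linarith
  rw [hGcard]
  linarith
end

section
/- Let K ∈ ℕ and n = 2^K. Let S ⊆ {1,…,n} with |S| = D ≥ 1, and let h : {1,…,n} → {1,…,n} be a uniformly random function. Let j = ⌈log₂(4D)⌉. Then Pr[ lsb(h(a)) < j for all a ∈ S ] ≥ 3/4. -/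
open Finset
open scoped Classical

/-!
A bad hash value `v` has `lsb v ≥ j`, i.e. `2 ^ j ∣ v`, and at most `n / 2 ^ j` of the values
`1, …, n` are such multiples. So each `a ∈ S` is bad with probability at most `2 ^ (-j)`, and by
the union bound some `a ∈ S` is bad with probability at most `D / 2 ^ j ≤ 1 / 4`, because
`⌈log₂ (4D)⌉ = Nat.clog 2 (4D)` gives `4D ≤ 2 ^ j`.
-/

section RandomFunction

variable {α β : Type*} [Fintype α] [DecidableEq α] [Fintype β]

theorem card_filter_apply (a : α) (p : β → Prop) [DecidablePred p] :
    #{f : α → β | p (f a)} = #{b | p b} * Fintype.card β ^ (Fintype.card α - 1) := by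
  rw [← Fintype.card_subtype, ← Fintype.card_subtype]
  have e : {f : α → β // p (f a)} ≃ {b : β // p b} × ({x : α // x ≠ a} → β) :=
    ((Equiv.funSplitAt a β).subtypeEquiv fun _ => Iff.rfl).trans
      Equiv.prodSubtypeFstEquivSubtypeProd
  rw [Fintype.card_congr e, Fintype.card_prod, Fintype.card_fun, Fintype.card_subtype_compl,
    Fintype.card_subtype_eq]

theorem card_filter_exists_apply_le (S : Finset α) (p : β → Prop) [DecidablePred p]
    [DecidablePred fun f : α → β => ∃ a ∈ S, p (f a)] :
    #{f : α → β | ∃ a ∈ S, p (f a)} ≤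
      #S * (#{b | p b} * Fintype.card β ^ (Fintype.card α - 1)) := by
  calc #{f : α → β | ∃ a ∈ S, p (f a)}
      ≤ #(S.biUnion fun a => {f : α → β | p (f a)}) := by
        apply card_le_card
        intro f hf
        simpa using hf
    _ ≤ _ := card_biUnion_le_card_mul _ _ _ fun a _ => (card_filter_apply a p).le

end RandomFunction

theorem card_filter_dvd_succ (n d : ℕ) : #{v : Fin n | d ∣ (v : ℕ) + 1} = n / d := by
  rw [← Nat.Ioc_filter_dvd_card_eq_div]
  refine card_bij (fun v _ => (v : ℕ) + 1) ?_ ?_ ?_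
  · intro v hv
    simp only [mem_filter, mem_univ, true_and, mem_Ioc] at hv ⊢
    exact ⟨⟨v.val.succ_pos, v.isLt⟩, hv⟩
  · intro v _ w _ h
    exact Fin.ext (Nat.succ_injective h)
  · intro x hx
    simp only [mem_filter, mem_Ioc] at hx
    refine ⟨⟨x - 1, by omega⟩, ?_, by simp only; omega⟩
    simp only [mem_filter, mem_univ, true_and]
    rw [Nat.sub_add_cancel hx.1.1]
    exact hx.2

theorem one_sub_le_card_filter_div {γ : Type*} [Fintype γ] [Nonempty γ] (P : γ → Prop)
    [DecidablePred P] {ε : ℝ} (h : (#{x | ¬P x} : ℝ) ≤ ε * Fintype.card γ) :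
    1 - ε ≤ #{x | P x} / Fintype.card γ := by
  have hpos : (0 : ℝ) < Fintype.card γ := by exact_mod_cast Fintype.card_pos
  have hsum := card_filter_add_card_filter_not (s := univ) P
  rw [card_univ] at hsum
  rw [le_div_iff₀ hpos]
  have : (#{x | P x} : ℝ) + #{x | ¬P x} = Fintype.card γ := by exact_mod_cast hsum
  linarith

theorem ceil_logb_two_natCast (m : ℕ) : ⌈Real.logb 2 (m : ℝ)⌉ = (Nat.clog 2 m : ℤ) := by
  have := Real.ceil_logb_natCast (b := 2) (r := (m : ℝ)) m.cast_nonneg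
  push_cast at this
  rw [this]
  exact_mod_cast Int.clog_natCast (R := ℝ) 2 m

theorem four_mul_card_filter_exists_pow_dvd_succ_le {n j : ℕ} (S : Finset (Fin n))
    (hj : 4 * #S ≤ 2 ^ j) :
    4 * #{h : Fin n → Fin n | ∃ a ∈ S, 2 ^ j ∣ (h a : ℕ) + 1} ≤ n ^ n :=
  calc _ ≤ 4 * (#S * (n / 2 ^ j * n ^ (n - 1))) := by
        gcongr
        have := card_filter_exists_apply_le S fun v : Fin n => 2 ^ j ∣ (v : ℕ) + 1
        rwa [card_filter_dvd_succ, Fintype.card_fin] at this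
    _ ≤ 2 ^ j * (n / 2 ^ j) * n ^ (n - 1) := by
        rw [← mul_assoc, ← mul_assoc]
        gcongr
    _ ≤ n * n ^ (n - 1) := by gcongr; exact Nat.mul_div_le n _
    _ ≤ n ^ n := by
        rcases n.eq_zero_or_pos with rfl | hn
        · simp
        · rw [mul_pow_sub_one hn.ne']

theorem stmt11_general (n : ℕ) (S : Finset (Fin n)) :
    (3 / 4 : ℝ) ≤
      ((Finset.univ.filter (fun h : Fin n → Fin n =>
          ∀ a ∈ S, ((padicValNat 2 ((h a : ℕ) + 1) : ℤ) <
            ⌈Real.logb 2 (4 * (S.card : ℝ))⌉))).card : ℝ) /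
        (Fintype.card (Fin n → Fin n) : ℝ) := by
  set j := Nat.clog 2 (4 * #S)
  have hceil : ⌈Real.logb 2 (4 * (#S : ℝ))⌉ = j := by
    exact_mod_cast ceil_logb_two_natCast (4 * #S)
  have hgood (h : Fin n → Fin n) : (∀ a ∈ S, (padicValNat 2 ((h a : ℕ) + 1) : ℤ) < j) ↔
      ¬∃ a ∈ S, 2 ^ j ∣ (h a : ℕ) + 1 := by
    push Not
    refine forall₂_congr fun a _ => ?_
    rw [padicValNat_dvd_iff_le (by omega), not_le]
    exact_mod_cast Iff.rfl
  have hbad : (4 * #{h : Fin n → Fin n | ∃ a ∈ S, 2 ^ j ∣ (h a : ℕ) + 1} : ℝ) ≤ n ^ n := by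
    exact_mod_cast four_mul_card_filter_exists_pow_dvd_succ_le S (Nat.le_pow_clog one_lt_two _)
  have : Nonempty (Fin n → Fin n) := ⟨id⟩
  simp_rw [hceil, hgood]
  refine (by norm_num : (3 / 4 : ℝ) = 1 - 1 / 4).le.trans (one_sub_le_card_filter_div _ ?_)
  simp only [not_not, Fintype.card_fun, Fintype.card_fin]
  push_cast
  linarith

/-- For a set `S` of `D ≥ 1` elements of `{1,…,n}` with `n = 2^K`, and a uniformly
random hash `h : {1,…,n} → {1,…,n}` (encoded via `Fin n`, with hash values
`(h a) + 1 ∈ {1,…,n}`), with probability at least `3/4` every element `a ∈ S` has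
`lsb(h(a)) < ⌈log₂(4D)⌉`, where `lsb` is the 2-adic valuation. -/
theorem stmt11 (K : ℕ) (n : ℕ) (hn : n = 2 ^ K) (S : Finset (Fin n))
    (hS : 1 ≤ S.card) :
    (3 / 4 : ℝ) ≤
      ((Finset.univ.filter (fun h : Fin n → Fin n =>
          ∀ a ∈ S, ((padicValNat 2 ((h a : ℕ) + 1) : ℤ) <
            ⌈Real.logb 2 (4 * (S.card : ℝ))⌉))).card : ℝ) /
        (Fintype.card (Fin n → Fin n) : ℝ) :=
  stmt11_general n S
end

section
/- Let K ∈ ℕ, n = 2^K, and let τ ≥ 600 be a real number. Let x ∈ ℕⁿ (indexed by {1,…,n}) be a vector of nonnegative integer frequencies and let D = |{a ∈ {1,…,n} : x_a > 0}|. Let h : {1,…,n} → {1,…,n} be a uniformly random function, and for each k ∈ {0,…,K} define f[k] = Σ_{a : lsb(h(a)) = k} x_a. Then with probability at least 2/3 over the choice of h, the following holds: for every function f̂ : {0,…,K} → ℝ satisfying |f̂[k] − f[k]| ≤ τ for all k ∈ {0,…,K}, if ℓ denotes the largest index in {0,…,K} with f̂[ℓ] > τ (and ℓ = 0 if no such index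 exists), then D/(12τ) ≤ 2^ℓ ≤ 4D + 1. -/
open Finset
open scoped Classical

/-!
Let `S` be the support of `x` and `D = #S`; the hash values `h a`, `a ∈ S`, are independent and
uniform, and `P(2 ^ lsb ≥ m + 1) ≤ 1 / (m + 1)`.

Upper bound: `f̂[ℓ] > τ` forces `f[ℓ] > 0`, so `ℓ = lsb (h a)` for some `a ∈ S`. By a union
bound over `S`, except with probability `D / (4D + 2) < 1/4` every `a ∈ S` has
`2 ^ lsb (h a) ≤ 4D + 1`.

Lower bound (only needed when `D ≥ 12τ`): pick `j` with `6τ 2^j ≤ D ≤ 12τ 2^j`. The number `X` of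
`a ∈ S` with `lsb (h a) = j` has mean `μ ∈ [3τ, 12τ]` and variance at most `μ`, so by Chebyshev
`X > 2τ` except with probability `μ / τ² ≤ 12 / τ ≤ 1/50`. Then `f[j] ≥ X > 2τ` gives `f̂[j] > τ`,
hence `ℓ ≥ j` and `2^ℓ ≥ 2^j ≥ D / (12τ)`.
-/

section FunctionCounting

variable {α β : Type*} [Fintype α] [DecidableEq α] [Fintype β] [DecidableEq β]

lemma card_filter_forall_apply_mem [Nonempty β] (T : Finset α) (A : Finset β) :
    (#{h : α → β | ∀ i ∈ T, h i ∈ A} : ℝ)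
      = (#A / Fintype.card β : ℝ) ^ #T * Fintype.card β ^ Fintype.card α := by
  have hpi : ({h : α → β | ∀ i ∈ T, h i ∈ A} : Finset _)
      = Fintype.piFinset fun i => if i ∈ T then A else univ := by
    ext h
    simp only [mem_filter, mem_univ, true_and, Fintype.mem_piFinset]
    refine ⟨fun hh i => ?_, fun hh i hi => by simpa [hi] using hh i⟩
    split_ifs with hi
    exacts [hh i hi, mem_univ _]
  have hT : #T ≤ Fintype.card α := card_le_univ T
  have hβ : (Fintype.card β : ℝ) ≠ 0 := by positivity
  rw [hpi, Fintype.card_piFinset]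
  simp only [apply_ite Finset.card, prod_ite, prod_const, card_univ]
  rw [filter_mem_eq_inter, univ_inter, filter_not, filter_mem_eq_inter, univ_inter,
    card_sdiff_of_subset (subset_univ _), card_univ]
  push_cast
  rw [div_pow, pow_sub₀ _ hβ hT]
  field_simp

variable [Nonempty β] (S : Finset α) (A : Finset β)

lemma card_filter_apply_mem (a : α) :
    (#{h : α → β | h a ∈ A} : ℝ) = #A / Fintype.card β * Fintype.card β ^ Fintype.card α := by
  rw [filter_congr fun h _ => (by simp : h a ∈ A ↔ ∀ i ∈ ({a} : Finset α), h i ∈ A),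
    card_filter_forall_apply_mem, card_singleton, pow_one]

lemma card_filter_exists_apply_mem_le :
    (#{h : α → β | ∃ a ∈ S, h a ∈ A} : ℝ)
      ≤ #S * (#A / Fintype.card β) * Fintype.card β ^ Fintype.card α := by
  have hunion : ({h : α → β | ∃ a ∈ S, h a ∈ A} : Finset _)
      = S.biUnion fun a => {h | h a ∈ A} := by
    ext h; simp
  calc (#{h : α → β | ∃ a ∈ S, h a ∈ A} : ℝ) ≤ ∑ a ∈ S, (#{h : α → β | h a ∈ A} : ℝ) := by
        rw [hunion]; exact_mod_cast card_biUnion_le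
    _ = _ := by simp only [card_filter_apply_mem, sum_const, nsmul_eq_mul]; ring

lemma sum_card_filter_apply_mem :
    ∑ h : α → β, (#{a ∈ S | h a ∈ A} : ℝ)
      = #S * (#A / Fintype.card β) * Fintype.card β ^ Fintype.card α := by
  simp only [card_filter, Nat.cast_sum, Nat.cast_ite, Nat.cast_one, Nat.cast_zero]
  rw [sum_comm]
  simp only [sum_boole, card_filter_apply_mem, sum_const, nsmul_eq_mul]
  ring

lemma sum_sq_card_filter_apply_mem :
    ∑ h : α → β, (#{a ∈ S | h a ∈ A} : ℝ) ^ 2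
      = #S * (#A / Fintype.card β) * (1 + (#S - 1) * (#A / Fintype.card β))
        * Fintype.card β ^ Fintype.card α := by
  set p : ℝ := #A / Fintype.card β
  have hpair : ∀ a b, (#{h : α → β | h a ∈ A ∧ h b ∈ A} : ℝ)
      = (p ^ 2 + if a = b then p - p ^ 2 else 0) * Fintype.card β ^ Fintype.card α := by
    intro a b
    rw [filter_congr fun h _ =>
        (by simp : h a ∈ A ∧ h b ∈ A ↔ ∀ i ∈ ({a, b} : Finset α), h i ∈ A),
      card_filter_forall_apply_mem]
    split_ifs with hab
    · subst hab; simp [p]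
    · rw [card_pair hab]; ring
  simp only [card_filter, Nat.cast_sum, Nat.cast_ite, Nat.cast_one, Nat.cast_zero, sq,
    Finset.sum_mul_sum, ite_zero_mul_ite_zero, mul_one]
  calc _ = ∑ a ∈ S, ∑ b ∈ S, (#{h : α → β | h a ∈ A ∧ h b ∈ A} : ℝ) := by
        rw [sum_comm]
        refine sum_congr rfl fun a _ => ?_
        rw [sum_comm]
        simp only [sum_boole]
    _ = _ := by
        simp only [hpair, ← sum_mul, sum_add_distrib, sum_const, sum_ite_eq, sum_ite_mem,
          inter_self, nsmul_eq_mul]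
        ring

lemma sum_sub_sq_card_filter_apply_mem :
    ∑ h : α → β, ((#{a ∈ S | h a ∈ A} : ℝ) - #S * (#A / Fintype.card β)) ^ 2
      = #S * (#A / Fintype.card β) * (1 - #A / Fintype.card β)
        * Fintype.card β ^ Fintype.card α := by
  simp only [sub_sq, sum_add_distrib, sum_sub_distrib, ← sum_mul, ← mul_sum, sum_const, card_univ,
    Fintype.card_fun, sum_sq_card_filter_apply_mem, sum_card_filter_apply_mem, nsmul_eq_mul]
  push_cast
  ring

end FunctionCounting

lemma card_filter_le_sub_mul_sq_le {γ : Type*} (s : Finset γ) (f : γ → ℝ) (μ : ℝ) {t : ℝ}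
    (ht : 0 ≤ t) : (#{x ∈ s | f x ≤ μ - t} : ℝ) * t ^ 2 ≤ ∑ x ∈ s, (f x - μ) ^ 2 := by
  calc (#{x ∈ s | f x ≤ μ - t} : ℝ) * t ^ 2 = ∑ x ∈ s with f x ≤ μ - t, t ^ 2 := by
        rw [sum_const, nsmul_eq_mul]
    _ ≤ ∑ x ∈ s with f x ≤ μ - t, (f x - μ) ^ 2 :=
        sum_le_sum fun x hx => by
          have := (mem_filter.1 hx).2
          nlinarith
    _ ≤ ∑ x ∈ s, (f x - μ) ^ 2 :=
        sum_le_sum_of_subset_of_nonneg (filter_subset _ _) fun _ _ _ => sq_nonneg _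

/-- `v : Fin n` stands for the hash value `v + 1 ∈ {1, …, n}`. -/
def hashLsb {n : ℕ} (v : Fin n) : ℕ := padicValNat 2 (v + 1)

lemma card_le_hashLsb (n k : ℕ) : #{v : Fin n | k ≤ hashLsb v} = n / 2 ^ k := by
  have hdvd : ∀ v : Fin n, k ≤ hashLsb v ↔ 2 ^ k ∣ (v : ℕ) + 1 := fun v =>
    (padicValNat_dvd_iff_le (Nat.succ_ne_zero _)).symm
  rw [filter_congr fun v _ => hdvd v, card_filter,
    Fin.sum_univ_eq_sum_range (fun i => if 2 ^ k ∣ i + 1 then 1 else 0), ← card_filter,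
    Nat.card_multiples]

lemma card_lt_two_pow_hashLsb (n m : ℕ) :
    #{v : Fin n | m < 2 ^ hashLsb v} = n / 2 ^ m.size := by
  simp_rw [← Nat.size_le]
  exact card_le_hashLsb n m.size

lemma card_hashLsb_eq (n j : ℕ) :
    #{v : Fin n | hashLsb v = j} = n / 2 ^ j - n / 2 ^ (j + 1) := by
  have hsdiff : univ.filter (fun v : Fin n => hashLsb v = j)
      = univ.filter (fun v : Fin n => j ≤ hashLsb v) \ univ.filter (j + 1 ≤ hashLsb ·) := by
    ext v; simp only [mem_filter, mem_sdiff, mem_univ, true_and]; omega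
  rw [hsdiff, card_sdiff_of_subset (monotone_filter_right _ fun v hv => by omega),
    card_le_hashLsb, card_le_hashLsb]

lemma card_hashLsb_eq_mul_le {K j : ℕ} (hj : j ≤ K) :
    #{v : Fin (2 ^ K) | hashLsb v = j} * 2 ^ j ≤ 2 ^ K ∧
      2 ^ K ≤ 2 * #{v : Fin (2 ^ K) | hashLsb v = j} * 2 ^ j := by
  have hK : 2 ^ K = 2 ^ (K - j) * 2 ^ j := by rw [← pow_add, Nat.sub_add_cancel hj]
  have hdiv : 2 ^ K / 2 ^ j = 2 ^ (K - j) := Nat.pow_div hj two_pos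
  rw [card_hashLsb_eq, pow_succ, ← Nat.div_div_eq_div_mul, hdiv, hK]
  constructor
  · exact Nat.mul_le_mul_right _ (Nat.sub_le _ _)
  · exact Nat.mul_le_mul_right _ (by omega)

section Estimate

variable {ι : Type*} [Fintype ι] (g x : ι → ℕ)

def bucketSum (k : ℕ) : ℕ := ∑ a ∈ univ.filter (fun a => g a = k), x a

def IsLastAbove (fhat : ℕ → ℝ) (τ : ℝ) (K L : ℕ) : Prop :=
  (L ≤ K ∧ τ < fhat L ∧ ∀ k ≤ K, τ < fhat k → k ≤ L) ∨ (L = 0 ∧ ∀ k ≤ K, fhat k ≤ τ)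

variable {g x} {fhat : ℕ → ℝ} {τ : ℝ} {K L : ℕ}

lemma IsLastAbove.le_of_lt (hL : IsLastAbove fhat τ K L) {j : ℕ} (hj : j ≤ K)
    (hτj : τ < fhat j) : j ≤ L := by
  rcases hL with ⟨-, -, hmax⟩ | ⟨-, hall⟩
  · exact hmax j hj hτj
  · exact absurd (hall j hj) hτj.not_ge

lemma card_pos_le_bucketSum (k : ℕ) : #{a | 0 < x a ∧ g a = k} ≤ bucketSum g x k := by
  rw [bucketSum, filter_congr fun a _ => and_comm, ← filter_filter, card_filter]
  exact sum_le_sum fun a _ => by split_ifs <;> omega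

lemma two_pow_le_of_isLastAbove {M : ℕ} (hM : 1 ≤ M) (hg : ∀ a, 0 < x a → 2 ^ g a ≤ M)
    (hclose : ∀ k ≤ K, |fhat k - bucketSum g x k| ≤ τ) (hL : IsLastAbove fhat τ K L) :
    2 ^ L ≤ M := by
  rcases hL with ⟨hLK, hτL, -⟩ | ⟨rfl, -⟩
  · have hne : bucketSum g x L ≠ 0 := by
      intro h0
      have := (abs_le.1 (hclose L hLK)).2
      rw [h0, Nat.cast_zero, sub_zero] at this
      linarith
    obtain ⟨a, ha, hxa⟩ := exists_ne_zero_of_sum_ne_zero hne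
    rw [← (mem_filter.1 ha).2]
    exact hg a (Nat.pos_of_ne_zero hxa)
  · simpa using hM

lemma le_of_isLastAbove {j : ℕ} (hj : j ≤ K) (hcount : 2 * τ < #{a | 0 < x a ∧ g a = j})
    (hclose : ∀ k ≤ K, |fhat k - bucketSum g x k| ≤ τ) (hL : IsLastAbove fhat τ K L) :
    j ≤ L := by
  have hsum : 2 * τ < bucketSum g x j :=
    hcount.trans_le (by exact_mod_cast card_pos_le_bucketSum j)
  exact hL.le_of_lt hj (by linarith [(abs_le.1 (hclose j hj)).1])

end Estimate

section HashCounting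

variable {α : Type*} [Fintype α] [DecidableEq α]

lemma card_exists_lt_two_pow_hashLsb_mul_le {n : ℕ} [NeZero n] (S : Finset α) :
    (#{h : α → Fin n | ∃ a ∈ S, 4 * #S + 1 < 2 ^ hashLsb (h a)} : ℝ) * 4
      ≤ (n : ℝ) ^ Fintype.card α := by
  set A : Finset (Fin n) := {v | 4 * #S + 1 < 2 ^ hashLsb v}
  have hA : #A * (4 * #S + 2) ≤ n := by
    rw [card_lt_two_pow_hashLsb]
    calc n / 2 ^ (4 * #S + 1).size * (4 * #S + 2)
        ≤ n / 2 ^ (4 * #S + 1).size * 2 ^ (4 * #S + 1).size :=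
          Nat.mul_le_mul_left _ (Nat.lt_size_self _)
      _ ≤ n := Nat.div_mul_le_self _ _
  have hunion := card_filter_exists_apply_mem_le (β := Fin n) S A
  simp only [A, mem_filter, mem_univ, true_and, Fintype.card_fin] at hunion
  have hn : (0 : ℝ) < n := by simp [Nat.pos_of_neZero]
  have hSA : (#S : ℝ) * (#A / n) * 4 ≤ 1 := by
    rw [mul_div_assoc', div_mul_eq_mul_div, div_le_one hn]
    have : (#A : ℝ) * (4 * #S + 2) ≤ n := by exact_mod_cast hA
    nlinarith [(#A).cast_nonneg (α := ℝ)]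
  calc _ ≤ (#S : ℝ) * (#A / n) * n ^ Fintype.card α * 4 := by gcongr
    _ ≤ (n : ℝ) ^ Fintype.card α := by nlinarith [pow_pos hn (Fintype.card α)]

lemma exists_card_mul_le_forall_two_pow_hashLsb_le {n : ℕ} [NeZero n] (x : α → ℕ) :
    ∃ B : Finset (α → Fin n), (#B : ℝ) * 4 ≤ (n : ℝ) ^ Fintype.card α ∧
      ∀ h ∉ B, ∀ a, 0 < x a → 2 ^ hashLsb (h a) ≤ 4 * #{a | 0 < x a} + 1 :=
  ⟨_, card_exists_lt_two_pow_hashLsb_mul_le _, fun h hh a ha => not_lt.1 fun hlt =>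
    hh (mem_filter.2 ⟨mem_univ h, a, mem_filter.2 ⟨mem_univ a, ha⟩, hlt⟩)⟩

lemma card_filter_card_hashLsb_eq_le_mul_le {K j : ℕ} (hj : j ≤ K) {τ : ℝ} (hτ : 0 < τ)
    (S : Finset α) (hlo : 6 * τ * 2 ^ j ≤ #S) (hhi : #S ≤ 12 * τ * 2 ^ j) :
    (#{h : α → Fin (2 ^ K) | (#{a ∈ S | hashLsb (h a) = j} : ℝ) ≤ 2 * τ} : ℝ) * τ
      ≤ 12 * (2 ^ K : ℝ) ^ Fintype.card α := by
  obtain ⟨hle, hge⟩ := card_hashLsb_eq_mul_le (K := K) hj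
  set A : Finset (Fin (2 ^ K)) := {v | hashLsb v = j}
  set p : ℝ := #A / 2 ^ K
  have hp0 : 0 ≤ p := by positivity
  have hprob : p * 2 ^ j ≤ 1 ∧ 1 ≤ 2 * p * 2 ^ j := by
    have hp : p * 2 ^ j = #A * 2 ^ j / 2 ^ K := by ring
    rw [mul_assoc, hp, div_le_one (by positivity), ← mul_div_assoc, le_div_iff₀ (by positivity)]
    constructor <;> exact_mod_cast by linarith
  have hmean : 3 * τ ≤ #S * p ∧ #S * p ≤ 12 * τ := by
    constructor
    · nlinarith [mul_le_mul_of_nonneg_right hlo hp0, mul_le_mul_of_nonneg_left hprob.2 hτ.le]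
    · nlinarith [mul_le_mul_of_nonneg_right hhi hp0, mul_le_mul_of_nonneg_left hprob.1 hτ.le]
  have hA : ∀ h : α → Fin (2 ^ K), {a ∈ S | h a ∈ A} = {a ∈ S | hashLsb (h a) = j} := by
    intro h; simp [A]
  -- a count of at most `2τ` lies at least `τ` below the mean `#S * p ≥ 3τ`
  have hsub : univ.filter (fun h : α → Fin (2 ^ K) => (#{a ∈ S | hashLsb (h a) = j} : ℝ) ≤ 2 * τ)
      ⊆ univ.filter (fun h : α → Fin (2 ^ K) => (#{a ∈ S | h a ∈ A} : ℝ) ≤ #S * p - τ) :=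
    monotone_filter_right _ fun h _ hh => by rw [hA]; linarith
  have hcheb := card_filter_le_sub_mul_sq_le univ
    (fun h : α → Fin (2 ^ K) => (#{a ∈ S | h a ∈ A} : ℝ)) (#S * p) hτ.le
  have hvarEq := sum_sub_sq_card_filter_apply_mem (β := Fin (2 ^ K)) S A
  simp only [Fintype.card_fin, Nat.cast_pow, Nat.cast_ofNat] at hvarEq
  rw [hvarEq] at hcheb
  have hN : (0 : ℝ) < (2 ^ K) ^ Fintype.card α := by positivity
  have hvar : #S * p * (1 - p) * (2 ^ K : ℝ) ^ Fintype.card α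
      ≤ 12 * τ * (2 ^ K) ^ Fintype.card α :=
    mul_le_mul_of_nonneg_right
      (by nlinarith [mul_nonneg (mul_nonneg (#S).cast_nonneg hp0) hp0]) hN.le
  refine le_of_mul_le_mul_right ?_ hτ
  calc _ ≤ (#{h : α → Fin (2 ^ K) | (#{a ∈ S | h a ∈ A} : ℝ) ≤ #S * p - τ} : ℝ) * τ ^ 2 := by
        rw [mul_assoc, ← sq]; gcongr
    _ ≤ _ := hcheb.trans hvar
    _ = 12 * (2 ^ K : ℝ) ^ Fintype.card α * τ := by ring

lemma exists_card_mul_le_forall_isLastAbove {K : ℕ} {τ : ℝ} (hτ : 1 ≤ τ) (x : α → ℕ)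
    (hD : #{a | 0 < x a} ≤ 2 ^ K) :
    ∃ B : Finset (α → Fin (2 ^ K)), (#B : ℝ) * τ ≤ 12 * (2 ^ K : ℝ) ^ Fintype.card α ∧
      ∀ h ∉ B, ∀ fhat : ℕ → ℝ, (∀ k ≤ K, |fhat k - bucketSum (fun a => hashLsb (h a)) x k| ≤ τ) →
        ∀ L, IsLastAbove fhat τ K L → (#{a | 0 < x a} : ℝ) / (12 * τ) ≤ 2 ^ L := by
  have hτ0 : 0 < τ := by linarith
  set S : Finset α := {a | 0 < x a}
  rcases lt_or_ge (#S : ℝ) (12 * τ) with hsmall | hlarge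
  · refine ⟨∅, by simp, fun h _ fhat _ L _ => ?_⟩
    calc (#S : ℝ) / (12 * τ) ≤ 1 := (div_le_one (by positivity)).2 hsmall.le
      _ ≤ 2 ^ L := one_le_pow₀ one_le_two
  obtain ⟨i, hi, hi'⟩ := exists_nat_pow_near ((one_le_div (by positivity)).2 hlarge) one_lt_two
  rw [le_div_iff₀ (by positivity)] at hi
  rw [div_lt_iff₀ (by positivity)] at hi'
  have hiK : i + 1 ≤ K := by
    have : (2 : ℝ) ^ i < 2 ^ K := by
      have : (#S : ℝ) ≤ 2 ^ K := by exact_mod_cast hD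
      nlinarith [pow_pos (two_pos (α := ℝ)) i]
    exact pow_lt_pow_iff_right₀ one_lt_two |>.1 this
  refine ⟨univ.filter fun h : α → Fin (2 ^ K) => (#{a ∈ S | hashLsb (h a) = i + 1} : ℝ) ≤ 2 * τ,
    card_filter_card_hashLsb_eq_le_mul_le hiK hτ0 S (by rw [pow_succ]; linarith) (by linarith),
    ?_⟩
  intro h hh fhat hclose L hL
  have hcount : 2 * τ < #{a | 0 < x a ∧ hashLsb (h a) = i + 1} := by
    rw [mem_filter, not_and, not_le] at hh
    rw [← filter_filter]
    exact hh (mem_univ h)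
  calc (#S : ℝ) / (12 * τ) ≤ 2 ^ (i + 1) := by rw [div_le_iff₀ (by positivity)]; linarith
    _ ≤ 2 ^ L := pow_le_pow_right₀ one_le_two (le_of_isLastAbove hiK hcount hclose hL)

end HashCounting

/-- Error guarantee of the MinHash subroutine. Let `n = 2^K`, `τ ≥ 600`, `x` a vector
of nonnegative frequencies with support size `D`, and `h : {1,…,n} → {1,…,n}` a
uniformly random hash (encoded via `Fin n`, with hash values `(h a) + 1 ∈ {1,…,n}`).
Set `f[k] = ∑_{a : lsb(h(a)) = k} x_a` for `k ∈ {0,…,K}`, where `lsb` is the 2-adic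
valuation. With probability at least `2/3` over `h`: for any estimates `f̂` with
`|f̂[k] − f[k]| ≤ τ` for all `k ≤ K`, if `ℓ` is the largest index in `{0,…,K}` with
`f̂[ℓ] > τ` (and `ℓ = 0` if none exists), then `D/(12τ) ≤ 2^ℓ ≤ 4D + 1`. -/
theorem stmt12 (K : ℕ) (n : ℕ) (hn : n = 2 ^ K) (τ : ℝ) (hτ : 600 ≤ τ)
    (x : Fin n → ℕ) :
    (2 / 3 : ℝ) ≤
      ((Finset.univ.filter (fun h : Fin n → Fin n =>
          ∀ fhat : ℕ → ℝ,
            (∀ k ≤ K, |fhat k -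
                ((∑ a ∈ Finset.univ.filter
                    (fun a : Fin n => padicValNat 2 ((h a : ℕ) + 1) = k), x a : ℕ) : ℝ)| ≤ τ) →
            ∀ L : ℕ,
              ((L ≤ K ∧ τ < fhat L ∧ ∀ k ≤ K, τ < fhat k → k ≤ L) ∨
                (L = 0 ∧ ∀ k ≤ K, fhat k ≤ τ)) →
              (((Finset.univ.filter (fun a : Fin n => 0 < x a)).card : ℝ) / (12 * τ) ≤
                  2 ^ L ∧
                (2 : ℝ) ^ L ≤
                  4 * ((Finset.univ.filter (fun a : Fin n => 0 < x a)).card : ℝ) + 1))).card : ℝ) /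
        (Fintype.card (Fin n → Fin n) : ℝ) := by
  subst hn
  set S : Finset (Fin (2 ^ K)) := {a | 0 < x a}
  obtain ⟨B₁, hB₁, hupper⟩ := exists_card_mul_le_forall_two_pow_hashLsb_le (n := 2 ^ K) x
  obtain ⟨B₂, hB₂, hlower⟩ := exists_card_mul_le_forall_isLastAbove (τ := τ) (by linarith) x
    ((card_le_univ S).trans (Fintype.card_fin _).le)
  simp only [Fintype.card_fin, Nat.cast_pow, Nat.cast_ofNat] at hB₁ hB₂
  have hgood : (B₁ ∪ B₂)ᶜ ⊆ univ.filter fun h => ∀ fhat : ℕ → ℝ,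
      (∀ k ≤ K, |fhat k - bucketSum (fun a => hashLsb (h a)) x k| ≤ τ) →
        ∀ L, IsLastAbove fhat τ K L → (#S : ℝ) / (12 * τ) ≤ 2 ^ L ∧ (2 : ℝ) ^ L ≤ 4 * #S + 1 := by
    intro h hh
    rw [mem_compl, mem_union, not_or] at hh
    refine mem_filter.2 ⟨mem_univ h, fun fhat hclose L hL => ⟨hlower h hh.2 fhat hclose L hL, ?_⟩⟩
    exact_mod_cast two_pow_le_of_isLastAbove (by omega) (hupper h hh.1) hclose hL
  have hN : (Fintype.card (Fin (2 ^ K) → Fin (2 ^ K)) : ℝ) = (2 ^ K : ℝ) ^ 2 ^ K := by simp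
  have hcompl : (#(B₁ ∪ B₂)ᶜ : ℝ) + #(B₁ ∪ B₂) = (2 ^ K : ℝ) ^ 2 ^ K := by
    rw [← hN]; exact_mod_cast card_compl_add_card _
  have hunion : (#(B₁ ∪ B₂) : ℝ) ≤ #B₁ + #B₂ := by exact_mod_cast card_union_le B₁ B₂
  rw [le_div_iff₀ (by rw [hN]; positivity), hN]
  calc (2 / 3 : ℝ) * (2 ^ K : ℝ) ^ 2 ^ K ≤ #(B₁ ∪ B₂)ᶜ := by
        nlinarith [mul_le_mul_of_nonneg_left hτ (#B₂).cast_nonneg]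
    _ ≤ _ := by exact_mod_cast card_le_card hgood
end
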